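/- arXiv:1308.5424 — 7 statements merged into one kernel-verified Lean document; each statement's English description precedes it below -/
import Mathlib

section
/- Let J be a nonempty finite index set, let G be a real symmetric J×J matrix that is 1-sparse, and let g > 0 be such that every entry of G has absolute value at most g. Then for every positive integer ℓ there exist 4ℓ real symmetric J×J matrices U_1, …, U_{4ℓ} that pairwise commute, each satisfying U_k² = I, such that every entry of the matrix G − (g/(2ℓ))·(U_1 + ⋯ + U_{4ℓ}) has absolute value at most g/(2ℓ). (Thus a 1-sparse real symmetric matrix G can be approximated within max-norm distance γ by an equally weighted sum of O(‖G‖_max/γ) commuting self-inverse matrices.) -/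
/-- A 1-sparse real symmetric matrix `G` with entries bounded by `g` can be approximated,
within max-norm distance `g/(2ℓ)`, by an equally weighted sum `(g/(2ℓ))·(U₁ + ⋯ + U_{4ℓ})`
of `4ℓ` pairwise commuting self-inverse real symmetric matrices. -/
theorem stmt_0 {J : Type*} [Fintype J] [DecidableEq J] [Nonempty J]
    (G : Matrix J J ℝ) (hGsymm : G.IsSymm)
    (hGrow : ∀ a b b', G a b ≠ 0 → G a b' ≠ 0 → b = b')
    (hGcol : ∀ a a' b, G a b ≠ 0 → G a' b ≠ 0 → a = a')
    (g : ℝ) (hg : 0 < g) (hbound : ∀ a b, |G a b| ≤ g)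
    (ℓ : ℕ) (hℓ : 0 < ℓ) :
    ∃ U : Fin (4 * ℓ) → Matrix J J ℝ,
      (∀ k, (U k).IsSymm) ∧
      (∀ k k', U k * U k' = U k' * U k) ∧
      (∀ k, U k * U k = 1) ∧
      (∀ a b, |G a b - (g / (2 * ℓ)) * (∑ k, U k) a b| ≤ g / (2 * ℓ)) := by
  classical
  set c : ℝ := g / (2 * ℓ) with hc
  have hℓR : (0:ℝ) < (ℓ:ℝ) := by exact_mod_cast hℓ
  have hc0 : 0 < c := div_pos hg (by positivity)
  -- the involution σ given by the sparsity pattern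
  set σ : J → J := fun a => if h : ∃ b, G a b ≠ 0 then h.choose else a with hσdef
  have hσ_spec : ∀ a b, G a b ≠ 0 → σ a = b := by
    intro a b hb
    have h : ∃ b, G a b ≠ 0 := ⟨b, hb⟩
    simp only [hσdef, dif_pos h]
    exact hGrow a h.choose b h.choose_spec hb
  have hσ0 : ∀ a b, b ≠ σ a → G a b = 0 := by
    intro a b h
    by_contra hb
    exact h (hσ_spec a b hb).symm
  have hσσ : ∀ a, σ (σ a) = a := by
    intro a
    by_cases h : ∃ b, G a b ≠ 0
    · obtain ⟨b, hb⟩ := h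
      have h1 : σ a = b := hσ_spec a b hb
      have hba : G b a ≠ 0 := by rw [hGsymm.apply]; exact hb
      rw [h1]; exact hσ_spec b a hba
    · have h1 : σ a = a := by simp only [hσdef, dif_neg h]
      rw [h1, h1]
  have hGval : ∀ a, G (σ a) (σ (σ a)) = G a (σ a) := by
    intro a
    rw [hσσ a]
    exact hGsymm.apply a (σ a)
  -- the integer approximation
  set m : J → ℤ := fun a => round (G a (σ a) / (2 * c)) with hmdef
  have hm_symm : ∀ a, m (σ a) = m a := by
    intro a
    simp only [hmdef, hGval a]
  have hm_bound : ∀ a, |m a| ≤ (ℓ:ℤ) := by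
    intro a
    have h2c : (0:ℝ) < 2 * c := by positivity
    have hy : |G a (σ a) / (2 * c)| ≤ (ℓ:ℝ) := by
      rw [abs_div, abs_of_pos h2c, div_le_iff₀ h2c]
      calc |G a (σ a)| ≤ g := hbound a (σ a)
        _ = (ℓ:ℝ) * (2 * c) := by
            rw [hc]; field_simp
    have hr : |(m a : ℝ)| ≤ (ℓ:ℝ) + 1/2 := by
      have := abs_sub_round (G a (σ a) / (2 * c))
      calc |(m a : ℝ)| = |G a (σ a) / (2*c) - (G a (σ a) / (2*c) - (m a : ℝ))| := by ring_nf
        _ ≤ |G a (σ a) / (2*c)| + |G a (σ a) / (2*c) - (m a : ℝ)| := abs_sub _ _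
        _ ≤ (ℓ:ℝ) + 1/2 := add_le_add hy this
    have : |(m a : ℝ)| < (ℓ:ℝ) + 1 := lt_of_le_of_lt hr (by linarith)
    have : |m a| < (ℓ:ℤ) + 1 := by exact_mod_cast this
    omega
  -- the cut point
  set p : J → ℕ := fun a => (2 * (ℓ:ℤ) + m a).toNat with hpdef
  have hpZ : ∀ a, (p a : ℤ) = 2 * ℓ + m a := by
    intro a
    simp only [hpdef]
    have := hm_bound a
    rw [Int.toNat_of_nonneg]
    · have := abs_le.mp this; omega
  have hp_le : ∀ a, p a ≤ 4 * ℓ := by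
    intro a
    have h1 := hpZ a
    have := abs_le.mp (hm_bound a)
    omega
  have hp_symm : ∀ a, p (σ a) = p a := by
    intro a; simp only [hpdef, hm_symm a]
  -- the signs
  set s : Fin (4 * ℓ) → J → ℝ := fun k a => if (k:ℕ) < p a then 1 else -1 with hsdef
  have hs_symm : ∀ k a, s k (σ a) = s k a := by
    intro k a; simp only [hsdef, hp_symm a]
  have hs_sq : ∀ k k' a, s k a * s k' a = if (((k:ℕ) < p a) ↔ ((k':ℕ) < p a)) then 1 else -1 := by
    intro k k' a
    simp only [hsdef]
    by_cases h1 : (k:ℕ) < p a <;> by_cases h2 : (k':ℕ) < p a <;> simp [h1, h2]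
  have hs_sum : ∀ a, (∑ k : Fin (4 * ℓ), s k a) = 2 * (m a : ℝ) := by
    intro a
    simp only [hsdef]
    rw [Fin.sum_univ_eq_sum_range (fun k => if k < p a then (1:ℝ) else -1)]
    have hsplit : ∀ k : ℕ, (if k < p a then (1:ℝ) else -1)
        = 2 * (if k < p a then (1:ℝ) else 0) - 1 := by
      intro k; by_cases h : k < p a <;> norm_num [h]
    simp only [hsplit]
    rw [Finset.sum_sub_distrib, ← Finset.mul_sum, Finset.sum_boole]
    have hfilt : (Finset.range (4 * ℓ)).filter (fun k => k < p a) = Finset.range (p a) := by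
      ext k
      simp only [Finset.mem_filter, Finset.mem_range]
      have := hp_le a
      omega
    rw [hfilt]
    simp only [Finset.card_range, Finset.sum_const, Finset.card_range, nsmul_eq_mul, mul_one]
    have h1 : ((p a : ℝ)) = 2 * (ℓ:ℝ) + (m a : ℝ) := by exact_mod_cast hpZ a
    rw [h1]
    push_cast
    ring
  -- the matrices
  set U : Fin (4 * ℓ) → Matrix J J ℝ :=
    fun k => Matrix.of fun a b => s k a * (if b = σ a then 1 else 0) with hUdef
  have hU_apply : ∀ k a b, U k a b = s k a * (if b = σ a then 1 else 0) := by
    intro k a b; simp [hUdef]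
  refine ⟨U, ?_, ?_, ?_, ?_⟩
  · -- symmetric
    intro k
    rw [Matrix.IsSymm]
    ext a b
    rw [Matrix.transpose_apply, hU_apply, hU_apply]
    by_cases h : b = σ a
    · have h' : a = σ b := by rw [h, hσσ]
      rw [if_pos h, if_pos h', h, hs_symm]
    · have h' : a ≠ σ b := by
        intro h''
        exact h (by rw [h'', hσσ])
      rw [if_neg h, if_neg h', mul_zero, mul_zero]
  · -- commuting
    have key : ∀ k k' : Fin (4 * ℓ), U k * U k'
        = Matrix.of fun a b => (s k a * s k' a) * (if b = a then 1 else 0) := by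
      intro k k'
      ext a b
      rw [Matrix.mul_apply]
      simp only [hU_apply, Matrix.of_apply]
      rw [Finset.sum_eq_single (σ a)]
      · rw [if_pos rfl, mul_one, hσσ, hs_symm]
        ring
      · intro x _ hx
        rw [if_neg hx, mul_zero, zero_mul]
      · intro hx
        exact absurd (Finset.mem_univ _) hx
    intro k k'
    rw [key, key]
    ext a b
    simp only [Matrix.of_apply]
    ring
  · -- self-inverse
    intro k
    ext a b
    rw [Matrix.mul_apply]
    simp only [hU_apply]
    rw [Finset.sum_eq_single (σ a)]
    · rw [if_pos rfl, mul_one, hσσ, hs_symm]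
      by_cases h : b = a
      · rw [if_pos h, mul_one, hs_sq, if_pos Iff.rfl, h, Matrix.one_apply_eq]
      · rw [if_neg h, mul_zero, mul_zero, Matrix.one_apply_ne (Ne.symm h)]
    · intro x _ hx
      rw [if_neg hx, mul_zero, zero_mul]
    · intro hx
      exact absurd (Finset.mem_univ _) hx
  · -- approximation
    intro a b
    have hsum : (∑ k, U k) a b = 2 * (m a : ℝ) * (if b = σ a then 1 else 0) := by
      rw [Matrix.sum_apply]
      simp only [hU_apply]
      rw [← Finset.sum_mul, hs_sum]
    rw [hsum]
    by_cases h : b = σ a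
    · rw [if_pos h, mul_one, h]
      have h2c : (0:ℝ) < 2 * c := by positivity
      have hr := abs_sub_round (G a (σ a) / (2 * c))
      have heq : G a (σ a) - c * (2 * (m a : ℝ))
          = (2 * c) * (G a (σ a) / (2 * c) - (m a : ℝ)) := by
        field_simp
      rw [heq, abs_mul, abs_of_pos h2c]
      calc (2 * c) * |G a (σ a) / (2 * c) - (m a : ℝ)| ≤ (2 * c) * (1/2) :=
            mul_le_mul_of_nonneg_left hr (le_of_lt h2c)
        _ = c := by ring
    · rw [if_neg h, mul_zero, mul_zero, hσ0 a b h, sub_zero, abs_zero]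
      exact le_of_lt hc0
end

section
/- Let M be a square real matrix with M³ = M, and define A := M + (I − M²) and B := M − (I − M²). Then A² = I, B² = I, A·B = B·A = 2M² − I, and M = (A + B)/2. Moreover, if M is symmetric then A and B are symmetric. -/
/-- If `M³ = M`, then `A := M + (I − M²)` and `B := M − (I − M²)` are self-inverse,
`A·B = B·A = 2M² − I`, and `M = (A + B)/2`; moreover `A` and `B` are symmetric whenever
`M` is. -/
theorem stmt_6 {J : Type*} [Fintype J] [DecidableEq J] (M A B : Matrix J J ℝ)
    (hM : M * M * M = M) (hA : A = M + (1 - M * M)) (hB : B = M - (1 - M * M)) :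
    A * A = 1 ∧ B * B = 1 ∧ A * B = (2 : ℝ) • (M * M) - 1 ∧
      B * A = (2 : ℝ) • (M * M) - 1 ∧ M = ((1 : ℝ) / 2) • (A + B) ∧
      (M.IsSymm → A.IsSymm ∧ B.IsSymm) := by
  have h3 : M * (M * M) = M := by rw [← mul_assoc, hM]
  subst hA hB
  refine ⟨?_, ?_, ?_, ?_, ?_, ?_⟩
  · noncomm_ring
    rw [h3]
    abel
  · noncomm_ring
    rw [h3]
    abel
  · noncomm_ring
    rw [h3]
    module
  · noncomm_ring
    rw [h3]
    module
  · noncomm_ring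
    rw [two_smul, smul_add, ← add_smul]
    norm_num
  · intro h
    constructor <;>
    · simp [Matrix.IsSymm, Matrix.transpose_add, Matrix.transpose_sub,
        Matrix.transpose_mul, h.eq]
end

section
/- Fix a real number s ∈ [0, π/2] and let ν² := cos s + sin s. Let U be an N×N complex matrix with U² = I. Define the 2N×2N block matrices R̃ := (1/ν)·[[√(cos s)·I, √(sin s)·I], [√(sin s)·I, −√(cos s)·I]], P̃ := [[I, 0], [0, −i·I]], and cU := [[I, 0], [0, U]] (the controlled-U operation). Then the top-left N×N block of the product R̃ · cU · P̃ · R̃ equals (1/(cos s + sin s)) · (cos(s)·I − i·sin(s)·U), i.e. (1/(cos s + sin s)) · exp(−i·s·U). -/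
/-!
Conjugating the controlled operation `[[1, 0], [0, V]]` by the ancilla rotation
`c • [[a, b], [b, -a]]` leaves `c² (a² + b² V)` in the top-left block. With `V = -i U`,
`a² = cos s`, `b² = sin s` and `c² = 1 / (cos s + sin s)` this is
`(cos s - i sin s U) / (cos s + sin s)`. Since `U² = 1`, the functional calculus
`(x, y) ↦ x P₊ + y P₋` along the spectral projections `P± = (1 ± U) / 2` is a continuous ring
homomorphism `ℂ × ℂ → Mₙ(ℂ)`; it commutes with `exp`, so `exp (z U) = cosh z + sinh z U`, and
for `z = -i s` this is again `cos s - i sin s U`.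
-/

open Matrix NormedSpace

section AncillaGadget

variable {n α : Type*} [Fintype n] [DecidableEq n] [CommRing α]

/-- The paper's `R̃` is `ancillaRotation (1/ν) √(cos s) √(sin s)`. -/
def ancillaRotation (c a b : α) : Matrix (n ⊕ n) (n ⊕ n) α :=
  c • fromBlocks (a • 1) (b • 1) (b • 1) (-(a • 1))

theorem toBlocks₁₁_ancillaRotation_mul_controlled_mul_ancillaRotation (c a b : α)
    (V : Matrix n n α) :
    (ancillaRotation c a b * fromBlocks 1 0 0 V * ancillaRotation c a b).toBlocks₁₁ =
      c ^ 2 • (a ^ 2 • 1 + b ^ 2 • V) := by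
  simp only [ancillaRotation, Matrix.smul_mul, Matrix.mul_smul, fromBlocks_multiply, smul_smul,
    Matrix.mul_one, Matrix.one_mul, Matrix.mul_zero, add_zero, zero_add, fromBlocks_smul,
    toBlocks_fromBlocks₁₁]
  module

end AncillaGadget

section SelfInverse

variable {A : Type*} [NormedRing A] [NormedAlgebra ℂ A]

noncomputable def prodRingHomOfMulSelfEqOne (u : A) (hu : u * u = 1) : ℂ × ℂ →+* A where
  toFun p := ((p.1 + p.2) / 2) • 1 + ((p.1 - p.2) / 2) • u
  map_one' := by norm_num
  map_mul' p q := by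
    simp only [Prod.fst_mul, Prod.snd_mul, add_mul, mul_add, smul_mul_smul, mul_one, one_mul, hu]
    module
  map_zero' := by norm_num
  map_add' p q := by
    simp only [Prod.fst_add, Prod.snd_add]
    module

theorem exp_smul_of_mul_self_eq_one (u : A) (hu : u * u = 1) (z : ℂ) :
    exp (z • u) = Complex.cosh z • 1 + Complex.sinh z • u := by
  have hz : z • u = prodRingHomOfMulSelfEqOne u hu (z, -z) := by
    simp [prodRingHomOfMulSelfEqOne]
  have hcont : Continuous (prodRingHomOfMulSelfEqOne u hu) := by
    simp only [prodRingHomOfMulSelfEqOne, RingHom.coe_mk, MonoidHom.coe_mk, OneHom.coe_mk]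
    fun_prop
  have hexp : exp ((z, -z) : ℂ × ℂ) = (Complex.exp z, Complex.exp (-z)) := by
    ext <;> simp [Complex.exp_eq_exp_ℂ]
  let : Algebra ℚ A := Algebra.compHom A (algebraMap ℚ ℂ)
  rw [hz, ← map_exp _ hcont, hexp, Complex.cosh, Complex.sinh]
  rfl

theorem Matrix.exp_smul_of_mul_self_eq_one {n : Type*} [Fintype n] [DecidableEq n]
    (U : Matrix n n ℂ) (hU : U * U = 1) (z : ℂ) :
    exp (z • U) = Complex.cosh z • 1 + Complex.sinh z • U := by
  -- Any matrix norm induces the product topology, with respect to which `exp` is defined.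
  let : NormedRing (Matrix n n ℂ) := Matrix.linftyOpNormedRing
  let : NormedAlgebra ℂ (Matrix n n ℂ) := Matrix.linftyOpNormedAlgebra
  exact _root_.exp_smul_of_mul_self_eq_one U hU z

end SelfInverse

theorem Complex.ofReal_sqrt_sq {x : ℝ} (hx : 0 ≤ x) : ((√x : ℝ) : ℂ) ^ 2 = x := by
  rw [← ofReal_pow, Real.sq_sqrt hx]

/-- Correctness of the single-ancilla gadget: for `s ∈ [0, π/2]`, `ν² = cos s + sin s`,
and an `N×N` self-inverse complex matrix `U` (`U² = I`), with the block matrices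
`R̃ = (1/ν)·[[√(cos s)·I, √(sin s)·I], [√(sin s)·I, −√(cos s)·I]]`,
`P̃ = [[I, 0], [0, −i·I]]` and `cU = [[I, 0], [0, U]]`, the top-left `N×N` block of
`R̃ · cU · P̃ · R̃` equals `(1/(cos s + sin s))·(cos(s)·I − i·sin(s)·U)`, i.e.
`(1/(cos s + sin s))·exp(−i·s·U)`. -/
theorem stmt_8 {N : Type*} [Fintype N] [DecidableEq N] (s : ℝ)
    (hs0 : 0 ≤ s) (hs1 : s ≤ Real.pi / 2)
    (U : Matrix N N ℂ) (hU : U * U = 1)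
    (Rt Pt cU : Matrix (N ⊕ N) (N ⊕ N) ℂ)
    (hRt : Rt = ((Real.sqrt (Real.cos s + Real.sin s) : ℂ))⁻¹ •
      Matrix.fromBlocks
        ((Real.sqrt (Real.cos s) : ℂ) • (1 : Matrix N N ℂ))
        ((Real.sqrt (Real.sin s) : ℂ) • (1 : Matrix N N ℂ))
        ((Real.sqrt (Real.sin s) : ℂ) • (1 : Matrix N N ℂ))
        (-((Real.sqrt (Real.cos s) : ℂ) • (1 : Matrix N N ℂ))))
    (hPt : Pt = Matrix.fromBlocks (1 : Matrix N N ℂ) 0 0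
      ((-Complex.I) • (1 : Matrix N N ℂ)))
    (hcU : cU = Matrix.fromBlocks (1 : Matrix N N ℂ) 0 0 U) :
    (Rt * cU * Pt * Rt).toBlocks₁₁ =
      (((Real.cos s + Real.sin s : ℝ) : ℂ))⁻¹ •
        ((Real.cos s : ℂ) • (1 : Matrix N N ℂ) - (Complex.I * (Real.sin s : ℂ)) • U) ∧
    (Rt * cU * Pt * Rt).toBlocks₁₁ =
      (((Real.cos s + Real.sin s : ℝ) : ℂ))⁻¹ •
        NormedSpace.exp ((-(Complex.I * (s : ℂ))) • U) := by
  have hcos : 0 ≤ Real.cos s := Real.cos_nonneg_of_mem_Icc ⟨by linarith [Real.pi_pos], hs1⟩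
  have hsin : 0 ≤ Real.sin s := Real.sin_nonneg_of_nonneg_of_le_pi hs0 (by linarith [Real.pi_pos])
  have hcontrolled : cU * Pt = fromBlocks 1 0 0 ((-Complex.I) • U) := by
    simp [hcU, hPt, fromBlocks_multiply]
  have hblock : (Rt * cU * Pt * Rt).toBlocks₁₁ =
      (((Real.cos s + Real.sin s : ℝ) : ℂ))⁻¹ •
        ((Real.cos s : ℂ) • (1 : Matrix N N ℂ) - (Complex.I * (Real.sin s : ℂ)) • U) := by
    rw [Matrix.mul_assoc Rt, hcontrolled, hRt, ← ancillaRotation, toBlocks₁₁_ancillaRotation_mul_controlled_mul_ancillaRotation,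
      inv_pow, Complex.ofReal_sqrt_sq (add_nonneg hcos hsin), Complex.ofReal_sqrt_sq hcos,
      Complex.ofReal_sqrt_sq hsin]
    module
  have hexp : exp ((-(Complex.I * (s : ℂ))) • U) =
      (Real.cos s : ℂ) • (1 : Matrix N N ℂ) - (Complex.I * (Real.sin s : ℂ)) • U := by
    rw [Matrix.exp_smul_of_mul_self_eq_one U hU, show -(Complex.I * s) = (-s : ℂ) * Complex.I by
      ring, Complex.cosh_mul_I, Complex.sinh_mul_I, Complex.cos_neg, Complex.sin_neg]
    push_cast
    module
  exact ⟨hblock, hblock.trans (by rw [hexp])⟩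
end

section
/- Let T and λ be natural numbers with λ ≥ 1, let N := 2T + λ, and let p be a real number with 3/4 ≤ p ≤ 1. Let X be a binomial random variable with N trials and success probability p, i.e. Pr[X = k] = C(N,k)·p^k·(1−p)^{N−k}. Then Pr[2X < N + T] ≤ exp(−λ²/(24·(2T + λ))). Explicitly, the sum of C(N,k)·p^k·(1−p)^{N−k} over all k with 2k < N + T is at most exp(−λ²/(24·(2T+λ))). -/
open Real Finset

lemma exp_neg_le_quad {x : ℝ} (hx : 0 ≤ x) : Real.exp (-x) ≤ 1 - x + x ^ 2 / 2 := by
  have h := Real.quadratic_le_exp_of_nonneg hx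
  have h2 : Real.exp (-x) * Real.exp x = 1 := by
    rw [← Real.exp_add]; simp
  have hA : (0:ℝ) < 1 + x + x ^ 2 / 2 := by nlinarith
  have hneg := (Real.exp_pos (-x)).le
  have h3 : Real.exp (-x) * (1 + x + x ^ 2 / 2) ≤ 1 := by
    calc Real.exp (-x) * (1 + x + x ^ 2 / 2) ≤ Real.exp (-x) * Real.exp x :=
          mul_le_mul_of_nonneg_left h hneg
      _ = 1 := h2
  have h4 : (1:ℝ) ≤ (1 - x + x ^ 2 / 2) * (1 + x + x ^ 2 / 2) := by nlinarith
  have h5 : Real.exp (-x) * (1 + x + x ^ 2 / 2) ≤ (1 - x + x ^ 2 / 2) * (1 + x + x ^ 2 / 2) :=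
    h3.trans h4
  exact le_of_mul_le_mul_right (by linarith [h5]) hA

/-- Chernoff bound for the random walk of segment attempts: for `N = 2T + λ` attempts each
succeeding with probability `p ≥ 3/4`, the probability that the number `X` of successes
satisfies `2X < N + T` is at most `exp(−λ²/(24·(2T + λ)))`. -/
theorem stmt_10 (T lam : ℕ) (hlam : 1 ≤ lam) (N : ℕ) (hN : N = 2 * T + lam)
    (p : ℝ) (hp : 3 / 4 ≤ p) (hp1 : p ≤ 1) :
    ∑ k ∈ (Finset.range (N + 1)).filter (fun k => 2 * k < N + T),
        (N.choose k : ℝ) * p ^ k * (1 - p) ^ (N - k) ≤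
      Real.exp (-(lam : ℝ) ^ 2 / (24 * (2 * (T : ℝ) + (lam : ℝ)))) := by
  have hNpos : 0 < N := by omega
  have hNR : (0:ℝ) < N := by exact_mod_cast hNpos
  set s : ℝ := (lam : ℝ) / (6 * N) with hs
  have hs0 : 0 ≤ s := by positivity
  have hs1 : s ≤ 1 / 6 := by
    rw [hs, div_le_div_iff₀ (by positivity) (by norm_num)]
    have : (lam : ℝ) ≤ N := by exact_mod_cast (by omega : lam ≤ N)
    nlinarith
  have hq0 : (0:ℝ) ≤ 1 - p := by linarith
  have hp0 : (0:ℝ) ≤ p := by linarith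
  -- step 1: bound filtered sum by full sum with exp weights
  have step1 : ∑ k ∈ (Finset.range (N + 1)).filter (fun k => 2 * k < N + T),
        (N.choose k : ℝ) * p ^ k * (1 - p) ^ (N - k) ≤
      ∑ k ∈ Finset.range (N + 1),
        (N.choose k : ℝ) * p ^ k * (1 - p) ^ (N - k)
          * Real.exp (s * ((N : ℝ) + T - 2 * k)) := by
    refine le_trans (Finset.sum_le_sum ?_) (Finset.sum_le_sum_of_subset_of_nonneg
      (Finset.filter_subset _ _) ?_)
    · intro k hk
      simp only [Finset.mem_filter] at hk
      have hk2 : (2 * k : ℝ) < (N : ℝ) + T := by exact_mod_cast hk.2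
      have h1 : (1:ℝ) ≤ Real.exp (s * ((N : ℝ) + T - 2 * k)) := by
        rw [← Real.exp_zero]
        apply Real.exp_le_exp.mpr
        have : (0:ℝ) ≤ (N : ℝ) + T - 2 * k := by push_cast at hk2 ⊢; linarith
        positivity
      nlinarith [mul_nonneg (mul_nonneg (Nat.cast_nonneg (N.choose k))
        (pow_nonneg hp0 k)) (pow_nonneg hq0 (N - k))]
    · intro k _ _
      have := Real.exp_pos (s * ((N : ℝ) + T - 2 * k))
      positivity
  -- step 2: rewrite weighted sum via binomial theorem
  have step2 : ∑ k ∈ Finset.range (N + 1),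
        (N.choose k : ℝ) * p ^ k * (1 - p) ^ (N - k)
          * Real.exp (s * ((N : ℝ) + T - 2 * k)) =
      Real.exp (s * ((N : ℝ) + T)) * (p * Real.exp (-(2 * s)) + (1 - p)) ^ N := by
    rw [add_pow, Finset.mul_sum]
    refine Finset.sum_congr rfl fun k hk => ?_
    have hexp : Real.exp (s * ((N : ℝ) + T - 2 * k))
        = Real.exp (s * ((N : ℝ) + T)) * Real.exp (-(2 * s)) ^ k := by
      rw [← Real.exp_nat_mul, ← Real.exp_add]
      ring_nf
    rw [hexp, mul_pow]
    ring
  -- step 3: bound base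
  have step3 : p * Real.exp (-(2 * s)) + (1 - p) ≤ Real.exp (-(3 / 2) * s + 3 / 2 * s ^ 2) := by
    have hb : Real.exp (-(2 * s)) ≤ 1 - 2 * s + 2 * s ^ 2 := by
      have := exp_neg_le_quad (x := 2 * s) (by linarith)
      nlinarith
    have hmono : Real.exp (-(2 * s)) ≤ 1 := by
      rw [← Real.exp_zero]; apply Real.exp_le_exp.mpr; linarith
    have hbase : p * Real.exp (-(2 * s)) + (1 - p) ≤ 1 - 3 / 2 * s + 3 / 2 * s ^ 2 := by
      have h1 : 1 - Real.exp (-(2 * s)) ≥ 2 * s - 2 * s ^ 2 := by linarith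
      have h2 : 2 * s - 2 * s ^ 2 ≥ 0 := by nlinarith
      nlinarith [Real.exp_pos (-(2*s))]
    calc p * Real.exp (-(2 * s)) + (1 - p) ≤ 1 + (-(3 / 2) * s + 3 / 2 * s ^ 2) := by linarith
      _ ≤ Real.exp (-(3 / 2) * s + 3 / 2 * s ^ 2) := by
          have := Real.add_one_le_exp (-(3 / 2) * s + 3 / 2 * s ^ 2); linarith
  have hbase0 : (0:ℝ) ≤ p * Real.exp (-(2 * s)) + (1 - p) := by
    have := (Real.exp_pos (-(2 * s))).le; positivity
  have step4 : Real.exp (s * ((N : ℝ) + T)) * (p * Real.exp (-(2 * s)) + (1 - p)) ^ N ≤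
      Real.exp (s * ((N : ℝ) + T) + (N : ℝ) * (-(3 / 2) * s + 3 / 2 * s ^ 2)) := by
    rw [Real.exp_add]
    refine mul_le_mul_of_nonneg_left ?_ (Real.exp_pos _).le
    calc (p * Real.exp (-(2 * s)) + (1 - p)) ^ N
        ≤ (Real.exp (-(3 / 2) * s + 3 / 2 * s ^ 2)) ^ N := pow_le_pow_left₀ hbase0 step3 N
      _ = Real.exp ((N : ℝ) * (-(3 / 2) * s + 3 / 2 * s ^ 2)) := (Real.exp_nat_mul _ N).symm
  have hfin : s * ((N : ℝ) + T) + (N : ℝ) * (-(3 / 2) * s + 3 / 2 * s ^ 2)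
      = -(lam : ℝ) ^ 2 / (24 * (2 * (T : ℝ) + (lam : ℝ))) := by
    have hNT : (N : ℝ) = 2 * T + lam := by exact_mod_cast hN
    rw [hs, hNT]
    have hTl : (0:ℝ) < 2 * (T : ℝ) + lam := by
      have : (1:ℝ) ≤ (lam : ℝ) := by exact_mod_cast hlam
      positivity
    field_simp
    ring
  calc ∑ k ∈ (Finset.range (N + 1)).filter (fun k => 2 * k < N + T),
        (N.choose k : ℝ) * p ^ k * (1 - p) ^ (N - k)
      ≤ Real.exp (s * ((N : ℝ) + T)) * (p * Real.exp (-(2 * s)) + (1 - p)) ^ N := by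
        rw [← step2]; exact step1
    _ ≤ Real.exp (s * ((N : ℝ) + T) + (N : ℝ) * (-(3 / 2) * s + 3 / 2 * s ^ 2)) := step4
    _ = Real.exp (-(lam : ℝ) ^ 2 / (24 * (2 * (T : ℝ) + (lam : ℝ)))) := by rw [hfin]
end

section
/- For every integer m ≥ 1, the sum Σ_{f=1}^{m} C(m,f)·(1/(4m))^f·(1 − 1/(4m))^{m−f} · f · e^f is strictly less than 2. -/
/-!
Writing `e^f = (e^1)^f`, the sum is the derivative identity of the binomial theorem,
`Σ f C(m,f) a^f b^(m-f) = m a (a+b)^(m-1)`, at `a = p e`, `b = 1 - p` with `p = 1/(4m)`.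
Since `m p = 1/4` it equals `(e/4) (1 + p(e-1))^(m-1) ≤ (e/4) exp(m p (e-1)) = (e/4) e^((e-1)/4)`,
and this is below `e²/4 < 2`.
-/

open Finset Real

theorem sum_Icc_natCast_mul_choose_mul_pow_mul_pow {R : Type*} [CommSemiring R] (a b : R) (m : ℕ) :
    ∑ f ∈ Icc 1 m, (f : R) * m.choose f * a ^ f * b ^ (m - f) = m * a * (a + b) ^ (m - 1) := by
  cases m with
  | zero => simp
  | succ n =>
    rw [← map_add_right_Icc 0 n 1, sum_map, ← Nat.range_succ_eq_Icc_zero, add_pow, mul_sum]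
    refine sum_congr rfl fun k _ => ?_
    have hkn : n + 1 - (k + 1) = n - k := by omega
    simp only [addRightEmbedding_apply, hkn, add_tsub_cancel_right]
    rw [← Nat.cast_comm, ← Nat.cast_mul, ← Nat.add_one_mul_choose_eq, Nat.cast_mul]
    ring

lemma exp_one_div_four_mul_exp_lt_two : exp 1 / 4 * exp ((exp 1 - 1) / 4) < 2 := by
  have he := exp_one_lt_d9
  have h : exp ((exp 1 - 1) / 4) ≤ exp 1 := exp_le_exp.2 (by linarith)
  nlinarith [exp_pos 1]

/-- The expected weighted fault count `Σ_{f=1}^m q(f)·f·e^f` is strictly less than `2`,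
where `q(f)` is the probability of `f` faults among `m` ancillas each independently
failing with probability `1/(4m)`. -/
theorem stmt_13 (m : ℕ) (hm : 1 ≤ m) :
    ∑ f ∈ Finset.Icc 1 m,
        (m.choose f : ℝ) * (1 / (4 * (m : ℝ))) ^ f * (1 - 1 / (4 * (m : ℝ))) ^ (m - f) *
          (f : ℝ) * Real.exp f < 2 := by
  set p : ℝ := 1 / (4 * m)
  have hmp : m * p = 1 / 4 := by
    have : (m : ℝ) ≠ 0 := by positivity
    simp only [p]
    field_simp
  have hx : 0 ≤ p * (exp 1 - 1) :=
    mul_nonneg (by positivity) (sub_nonneg.2 (one_le_exp zero_le_one))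
  calc ∑ f ∈ Icc 1 m, (m.choose f : ℝ) * p ^ f * (1 - p) ^ (m - f) * f * exp f
      = ∑ f ∈ Icc 1 m, (f : ℝ) * m.choose f * (p * exp 1) ^ f * (1 - p) ^ (m - f) := by
        refine sum_congr rfl fun f _ => ?_
        rw [← exp_one_pow]
        ring
    _ = exp 1 / 4 * (1 + p * (exp 1 - 1)) ^ (m - 1) := by
        rw [sum_Icc_natCast_mul_choose_mul_pow_mul_pow]
        linear_combination (exp 1 * (p * exp 1 + (1 - p)) ^ (m - 1)) * hmp
    _ ≤ exp 1 / 4 * (1 + p * (exp 1 - 1)) ^ m := by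
        gcongr
        · linarith
        · exact m.sub_le 1
    _ ≤ exp 1 / 4 * exp (p * (exp 1 - 1)) ^ m := by
        gcongr
        linarith [add_one_le_exp (p * (exp 1 - 1))]
    _ = exp 1 / 4 * exp ((exp 1 - 1) / 4) := by
        rw [← exp_nat_mul]
        congr 2
        linear_combination (exp 1 - 1) * hmp
    _ < 2 := exp_one_div_four_mul_exp_lt_two
end

section
/- For every integer m ≥ 35, the sum Σ_{f=1}^{m} C(m,f)·(1/(4m))^f·(1 − 1/(4m))^{m−f} · e^{f/10} is strictly less than 1/4. -/
lemma exp_tenth_le : Real.exp (1/10) ≤ 1.105172 := by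
  have h := Real.exp_bound' (x := 1/10) (by norm_num) (by norm_num) (n := 4) (by norm_num)
  refine h.trans ?_
  norm_num [Finset.sum_range_succ, Nat.factorial]

lemma exp_a_le : Real.exp (0.026293) ≤ 1.026643 := by
  have h := Real.exp_bound' (x := 0.026293) (by norm_num) (by norm_num) (n := 3) (by norm_num)
  refine h.trans ?_
  norm_num [Finset.sum_range_succ, Nat.factorial]

lemma exp_c_ge : (0.777028 : ℝ) ≤ Real.exp (-(35/139)) := by
  have habs : |(-(35/139) : ℝ)| = 35/139 := by
    rw [abs_neg, abs_of_nonneg] <;> norm_num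
  have h := Real.exp_bound (x := -(35/139)) (by rw [habs]; norm_num) (n := 4) (by norm_num)
  rw [habs] at h
  have h2 := (abs_sub_le_iff.1 h).2
  have hs : ∑ i ∈ Finset.range 4, (-(35/139):ℝ) ^ i / i.factorial
      = 1 - 35/139 + (35/139)^2/2 - (35/139)^3/6 := by
    norm_num [Finset.sum_range_succ, Nat.factorial]
  rw [hs] at h2
  norm_num [Nat.factorial] at h2
  linarith [h2]


/-- For integers `m ≥ 35`, the sum `Σ_{f=1}^m q(f)·e^{f/10}` is strictly less than `1/4`,
where `q(f)` is the probability of `f` faults among `m` ancillas each independently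
failing with probability `1/(4m)`. -/
theorem stmt_15 (m : ℕ) (hm : 35 ≤ m) :
    ∑ f ∈ Finset.Icc 1 m,
        (m.choose f : ℝ) * (1 / (4 * (m : ℝ))) ^ f * (1 - 1 / (4 * (m : ℝ))) ^ (m - f) *
          Real.exp ((f : ℝ) / 10) < 1 / 4 := by
  have hM : (35 : ℝ) ≤ (m : ℝ) := by exact_mod_cast hm
  have hM0 : (0 : ℝ) < (m : ℝ) := by linarith
  set p : ℝ := 1 / (4 * (m : ℝ)) with hpdef
  have hp0 : 0 < p := by positivity
  have hp1 : p ≤ 1 / 140 := by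
    rw [hpdef, div_le_div_iff₀ (by positivity) (by norm_num)]
    linarith
  set E : ℝ := Real.exp (1/10) with hEdef
  have hE1 : 1 ≤ E := Real.one_le_exp (by norm_num)
  -- rewrite sum as (pE + (1-p))^m - (1-p)^m
  have hsum : ∑ f ∈ Finset.Icc 1 m,
      (m.choose f : ℝ) * p ^ f * (1 - p) ^ (m - f) * Real.exp ((f : ℝ) / 10)
      = (p * E + (1 - p)) ^ m - (1 - p) ^ m := by
    have hterm : ∀ f : ℕ,
        (m.choose f : ℝ) * p ^ f * (1 - p) ^ (m - f) * Real.exp ((f : ℝ) / 10)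
        = (p * E) ^ f * (1 - p) ^ (m - f) * (m.choose f : ℝ) := by
      intro f
      have : Real.exp ((f : ℝ) / 10) = E ^ f := by
        rw [hEdef, ← Real.exp_nat_mul]
        congr 1; ring
      rw [this, mul_pow]; ring
    have hins : Finset.range (m + 1) = insert 0 (Finset.Icc 1 m) := by
      ext x
      simp only [Finset.mem_range, Finset.mem_insert, Finset.mem_Icc]
      omega
    have hpow := add_pow (p * E) (1 - p) m
    rw [hins, Finset.sum_insert (by simp)] at hpow
    simp only [pow_zero, Nat.sub_zero, Nat.choose_zero_right, Nat.cast_one, one_mul,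
      mul_one] at hpow
    rw [Finset.sum_congr rfl fun f _ => hterm f]
    linarith [hpow]
  rw [hsum]
  -- upper bound for the power
  have h1 : (p * E + (1 - p)) ^ m ≤ Real.exp ((E - 1) / 4) := by
    have hb : p * E + (1 - p) = 1 + p * (E - 1) := by ring
    have hle : 1 + p * (E - 1) ≤ Real.exp (p * (E - 1)) := by
      have := Real.add_one_le_exp (p * (E - 1))
      linarith
    have hnn : (0:ℝ) ≤ 1 + p * (E - 1) := by nlinarith
    calc (p * E + (1 - p)) ^ m = (1 + p * (E - 1)) ^ m := by rw [hb]
      _ ≤ Real.exp (p * (E - 1)) ^ m := pow_le_pow_left₀ hnn hle m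
      _ = Real.exp ((m : ℝ) * (p * (E - 1))) := by rw [Real.exp_nat_mul]
      _ = Real.exp ((E - 1) / 4) := by
          congr 1
          rw [hpdef]
          field_simp
  -- lower bound for (1-p)^m
  have h2 : Real.exp (-(35/139)) ≤ (1 - p) ^ m := by
    have hstep : Real.exp (-(35 / 139) / (m : ℝ)) ≤ 1 - p := by
      have he : 1 + 35 / (139 * (m : ℝ)) ≤ Real.exp (35 / (139 * (m : ℝ))) := by
        have := Real.add_one_le_exp (35 / (139 * (m : ℝ)))
        linarith
      have hpos : (0:ℝ) < 1 + 35 / (139 * (m : ℝ)) := by positivity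
      have hinv : Real.exp (-(35 / 139) / (m : ℝ)) ≤ 1 / (1 + 35 / (139 * (m : ℝ))) := by
        rw [show (-(35/139) / (m:ℝ)) = -(35 / (139 * (m:ℝ))) by field_simp,
          Real.exp_neg]
        rw [one_div]
        exact inv_anti₀ hpos he
      refine hinv.trans ?_
      rw [div_le_iff₀ hpos]
      have key : (1 - p) * (1 + 35 / (139 * (m:ℝ))) - 1 = ((m:ℝ) - 35) / (556 * (m:ℝ)^2) := by
        rw [hpdef]; field_simp; ring
      have hnn : (0:ℝ) ≤ ((m:ℝ) - 35) / (556 * (m:ℝ)^2) :=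
        div_nonneg (by linarith) (by positivity)
      linarith
    calc Real.exp (-(35/139)) = Real.exp (-(35/139) / (m:ℝ)) ^ m := by
          rw [← Real.exp_nat_mul]
          congr 1
          field_simp
      _ ≤ (1 - p) ^ m := pow_le_pow_left₀ (Real.exp_pos _).le hstep m
  -- final numeric
  have hEa : (E - 1) / 4 ≤ 0.026293 := by
    have := exp_tenth_le
    rw [← hEdef] at this
    norm_num at this ⊢
    linarith
  have hfin : Real.exp ((E - 1) / 4) < 1/4 + Real.exp (-(35/139)) := by
    have := (Real.exp_le_exp.2 hEa).trans exp_a_le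
    have h3 := exp_c_ge
    norm_num at this h3 ⊢
    linarith
  linarith
end

section
/- Let G be a 1-sparse square real matrix, let D be its diagonal part (D[a,a] = G[a,a] and D[a,b] = 0 for a ≠ b), and let O := G − D be its off-diagonal part. Then D·O = 0 and O·D = 0; in particular D and O commute. -/
/-- For a 1-sparse square real matrix `G`, its diagonal part `D` and off-diagonal part
`O := G − D` satisfy `D·O = 0` and `O·D = 0`; in particular `D` and `O` commute. -/
theorem stmt_17 {J : Type*} [Fintype J] [DecidableEq J] (G : Matrix J J ℝ)
    (hGrow : ∀ a b b', G a b ≠ 0 → G a b' ≠ 0 → b = b')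
    (hGcol : ∀ a a' b, G a b ≠ 0 → G a' b ≠ 0 → a = a')
    (D O : Matrix J J ℝ) (hD : D = Matrix.diagonal (fun a => G a a)) (hO : O = G - D) :
    D * O = 0 ∧ O * D = 0 ∧ D * O = O * D := by
  have hOent : ∀ a b, O a b = G a b - D a b := by
    intro a b; rw [hO]; simp
  have hOD : ∀ a, O a a = 0 := by
    intro a; rw [hOent, hD]; simp
  have h1 : D * O = 0 := by
    ext a b
    rw [hD, Matrix.diagonal_mul]
    by_cases hab : a = b
    · subst hab; simp [hOD]
    · simp only [Matrix.zero_apply]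
      rcases eq_or_ne (G a a) 0 with h | h
      · simp [h]
      rcases eq_or_ne (G a b) 0 with h2 | h2
      · rw [hOent, hD]
        simp [h2, Matrix.diagonal_apply_ne _ hab]
      · exact absurd (hGrow a a b h h2) hab
  have h2 : O * D = 0 := by
    ext a b
    rw [hD, Matrix.mul_diagonal]
    by_cases hab : a = b
    · subst hab; simp [hOD]
    · simp only [Matrix.zero_apply]
      rcases eq_or_ne (G b b) 0 with h | h
      · simp [h]
      rcases eq_or_ne (G a b) 0 with h2 | h2
      · rw [hOent, hD]
        simp [h2, Matrix.diagonal_apply_ne _ hab]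
      · exact absurd (hGcol a b b h2 h) hab
  exact ⟨h1, h2, by rw [h1, h2]⟩
end
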